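/- arXiv:1604.05533 — 2 statements merged into one kernel-verified Lean document; each statement's English description precedes it below -/
import Mathlib

section
/- Let g = [[a,b],[c,d]] ∈ GL₂(ℂ) with c+d ≠ 0, g1 = (a+b)/(c+d) ≠ 1 and a ≠ c, and assume g satisfies condition (C). Then for all k, m ∈ ℤ≥0 and all y, w ∈ ℂ: 𝔹_k^{(−m)}(y, w−1; g) = −(1/det g) · 𝔹_m^{(−k)}(w, y−1; g^{−1}). -/
open Set

/-- `Φ(z,−k,y)`: the rational function of `z`, analytic on `ℂ∖{1}`, which equals
`Σ_{n=0}^∞ (y+n)^k z^n` for `|z| < 1`; defined by `Φ(z,0,y) = 1/(1−z)` and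
`Φ(z,−(k+1),y) = (y + θ_z)·Φ(z,−k,y)` with the Euler operator `θ_z = z·d/dz`. -/
noncomputable def PhiNeg : ℕ → ℂ → ℂ → ℂ
  | 0 => fun _ z => 1 / (1 - z)
  | k + 1 => fun y z => y * PhiNeg k y z + z * deriv (PhiNeg k y) z

/-- `j_D(g,z) = cz + d` for `g = [[a,b],[c,d]]`. -/
def jD (g : Matrix (Fin 2) (Fin 2) ℂ) (z : ℂ) : ℂ := g 1 0 * z + g 1 1

/-- The Möbius action `gz = (az+b)/(cz+d)`. -/
noncomputable def act (g : Matrix (Fin 2) (Fin 2) ℂ) (z : ℂ) : ℂ :=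
  (g 0 0 * z + g 0 1) / jD g z

/-- The poly-Bernoulli polynomial `𝔹_m^{(−k)}(y,w;g)`, defined as `m!` times the `m`-th
Taylor coefficient at `t = 0` of `t ↦ e^{wt}·Φ(g e^{−t},−k,y)/j_D(g,e^{−t})`, i.e. the
`m`-th derivative of this function at `0`. -/
noncomputable def polyB (g : Matrix (Fin 2) (Fin 2) ℂ) (k m : ℕ) (y w : ℂ) : ℂ :=
  iteratedDeriv m (fun t : ℂ =>
    Complex.exp (w * t) * PhiNeg k y (act g (Complex.exp (-t))) /
      jD g (Complex.exp (-t))) 0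

/-- The Möbius transformation of the matrix `[[a,b],[c,d]]` on the Riemann sphere. -/
noncomputable def mob (a b c d : ℂ) (z : OnePoint ℂ) : OnePoint ℂ :=
  Option.elim (show Option ℂ from z)
    (if c = 0 then OnePoint.infty else (((a / c : ℂ) : OnePoint ℂ)))
    (fun w => if c * w + d = 0 then OnePoint.infty
      else (((a * w + b) / (c * w + d) : ℂ) : OnePoint ℂ))

/-- The circular arc `[1,+∞] = {x ∈ ℝ : x ≥ 1} ∪ {∞}` in the Riemann sphere. -/
def raySet : Set (OnePoint ℂ) :=
  {z | ∃ x : ℝ, 1 ≤ x ∧ z = ((x : ℂ) : OnePoint ℂ)} ∪ {OnePoint.infty}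

/-- Condition (C): `g([1,+∞]) ∩ [1,+∞] ⊆ {g1, g∞} ∩ {1, ∞}`. -/
noncomputable def condC (g : Matrix (Fin 2) (Fin 2) ℂ) : Prop :=
  mob (g 0 0) (g 0 1) (g 1 0) (g 1 1) '' raySet ∩ raySet ⊆
    ({mob (g 0 0) (g 0 1) (g 1 0) (g 1 1) (((1 : ℂ) : OnePoint ℂ)),
      mob (g 0 0) (g 0 1) (g 1 0) (g 1 1) OnePoint.infty} : Set (OnePoint ℂ)) ∩
      ({((1 : ℂ) : OnePoint ℂ), OnePoint.infty} : Set (OnePoint ℂ))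

/-! The identity is the symmetry of a double generating function. Put
`K(t, x) = e^{wt} e^{yx} / (j_D(g, e^{-t}) - (a e^{-t} + b) e^x)`.
Since `∂_x (e^{yx} F(u e^x)) = e^{yx} ((y + θ) F)(u e^x)`, the `m`-th `x`-derivative of `K(t, ·)`
at `0` is `e^{wt} Φ(g e^{-t}, -m, y) / j_D(g, e^{-t})`, so
`𝔹_k^{(-m)}(y, w; g) = ∂_t^k ∂_x^m K(0, 0)`.
Multiplying numerator and denominator by `-det g · e^{-t} e^x` shows
`K_{g,y,w-1}(t, x) = -(1/det g) · K_{g⁻¹,w,y-1}(x, t)`, and the mixed partial derivatives of a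
function analytic near `(0, 0)` commute. -/

open Complex Filter Topology

section DirDeriv

variable {E : Type*} [NormedAddCommGroup E] [NormedSpace ℂ E]

noncomputable def dirDeriv (v : ℂ × ℂ) (f : ℂ × ℂ → E) : ℂ × ℂ → E := fun p => fderiv ℂ f p v

variable {f : ℂ × ℂ → E} {p : ℂ × ℂ}

theorem Filter.EventuallyEq.dirDeriv {g : ℂ × ℂ → E} (h : f =ᶠ[𝓝 p] g) (v : ℂ × ℂ) :
    dirDeriv v f =ᶠ[𝓝 p] dirDeriv v g :=
  h.fderiv.mono fun _ hq => congrArg (fun L : ℂ × ℂ →L[ℂ] E => L v) hq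

variable [CompleteSpace E]

theorem analyticAt_dirDeriv (hf : AnalyticAt ℂ f p) (v : ℂ × ℂ) :
    AnalyticAt ℂ (dirDeriv v f) p :=
  (ContinuousLinearMap.apply ℂ E v).analyticAt _ |>.comp hf.fderiv

theorem analyticAt_iterate_dirDeriv (hf : AnalyticAt ℂ f p) (v : ℂ × ℂ) (m : ℕ) :
    AnalyticAt ℂ ((dirDeriv v)^[m] f) p := by
  induction m with
  | zero => exact hf
  | succ m ih => rw [Function.iterate_succ_apply']; exact analyticAt_dirDeriv ih v

theorem AnalyticAt.dirDeriv_comm (hf : AnalyticAt ℂ f p) (v w : ℂ × ℂ) :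
    dirDeriv v (dirDeriv w f) p = dirDeriv w (dirDeriv v f) p := by
  have hsymm : IsSymmSndFDerivAt ℂ f p := hf.contDiffAt.isSymmSndFDerivAt (n := 2) (by simp)
  have hsnd : ∀ u u' : ℂ × ℂ, dirDeriv u' (dirDeriv u f) p = fderiv ℂ (fderiv ℂ f) p u' u :=
    fun u u' => by
      change fderiv ℂ (fun q => fderiv ℂ f q u) p u' = _
      rw [fderiv_clm_apply hf.fderiv.differentiableAt (differentiableAt_const u)]
      simp
  rw [hsnd, hsnd, hsymm.eq]

theorem AnalyticAt.dirDeriv_iterate_comm (hf : AnalyticAt ℂ f p) (v w : ℂ × ℂ) (m : ℕ) :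
    dirDeriv v ((dirDeriv w)^[m] f) =ᶠ[𝓝 p] (dirDeriv w)^[m] (dirDeriv v f) := by
  induction m generalizing p with
  | zero => rfl
  | succ m ih =>
    simp only [Function.iterate_succ_apply']
    have hcomm : dirDeriv v (dirDeriv w ((dirDeriv w)^[m] f)) =ᶠ[𝓝 p]
        dirDeriv w (dirDeriv v ((dirDeriv w)^[m] f)) :=
      hf.eventually_analyticAt.mono fun _ hq =>
        (analyticAt_iterate_dirDeriv hq w m).dirDeriv_comm v w
    exact hcomm.trans (ih hf |>.dirDeriv w)

theorem AnalyticAt.iterate_dirDeriv_comm (hf : AnalyticAt ℂ f p) (v w : ℂ × ℂ) (k m : ℕ) :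
    (dirDeriv v)^[k] ((dirDeriv w)^[m] f) =ᶠ[𝓝 p] (dirDeriv w)^[m] ((dirDeriv v)^[k] f) := by
  induction k with
  | zero => rfl
  | succ k ih =>
    simp only [Function.iterate_succ_apply']
    exact (ih.dirDeriv v).trans ((analyticAt_iterate_dirDeriv hf v k).dirDeriv_iterate_comm v w m)

theorem AnalyticAt.iteratedDeriv_slice_snd {t x : ℂ} (hf : AnalyticAt ℂ f (t, x)) (m : ℕ) :
    iteratedDeriv m (fun x' => f (t, x')) x = (dirDeriv (0, 1))^[m] f (t, x) := by
  induction m generalizing x with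
  | zero => rfl
  | succ m ih =>
    have hnear : ∀ᶠ x' in 𝓝 x, AnalyticAt ℂ f (t, x') :=
      (Continuous.prodMk_right t).continuousAt.eventually hf.eventually_analyticAt
    have hev : iteratedDeriv m (fun x' => f (t, x')) =ᶠ[𝓝 x]
        fun x' => (dirDeriv (0, 1))^[m] f (t, x') := hnear.mono fun _ hx' => ih hx'
    rw [iteratedDeriv_succ, hev.deriv_eq, Function.iterate_succ_apply']
    have hline := (analyticAt_iterate_dirDeriv hf (0, 1) m).differentiableAt.hasFDerivAt
      |>.comp_hasDerivAt x ((hasDerivAt_const x t).prodMk (hasDerivAt_id x))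
    simpa [dirDeriv, Function.comp_def] using hline.deriv

theorem AnalyticAt.iteratedDeriv_slice_fst {t x : ℂ} (hf : AnalyticAt ℂ f (t, x)) (k : ℕ) :
    iteratedDeriv k (fun t' => f (t', x)) t = (dirDeriv (1, 0))^[k] f (t, x) := by
  induction k generalizing t with
  | zero => rfl
  | succ k ih =>
    have hnear : ∀ᶠ t' in 𝓝 t, AnalyticAt ℂ f (t', x) :=
      (Continuous.prodMk_left x).continuousAt.eventually hf.eventually_analyticAt
    have hev : iteratedDeriv k (fun t' => f (t', x)) =ᶠ[𝓝 t]
        fun t' => (dirDeriv (1, 0))^[k] f (t', x) := hnear.mono fun _ ht' => ih ht'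
    rw [iteratedDeriv_succ, hev.deriv_eq, Function.iterate_succ_apply']
    have hline := (analyticAt_iterate_dirDeriv hf (1, 0) k).differentiableAt.hasFDerivAt
      |>.comp_hasDerivAt t ((hasDerivAt_id t).prodMk (hasDerivAt_const t x))
    simpa [dirDeriv, Function.comp_def] using hline.deriv

theorem AnalyticAt.iteratedDeriv_iteratedDeriv_comm {t x : ℂ} (hf : AnalyticAt ℂ f (t, x))
    (k m : ℕ) :
    iteratedDeriv k (fun t' => iteratedDeriv m (fun x' => f (t', x')) x) t =
      iteratedDeriv m (fun x' => iteratedDeriv k (fun t' => f (t', x')) t) x := by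
  have hslice_snd : (fun t' => iteratedDeriv m (fun x' => f (t', x')) x) =ᶠ[𝓝 t]
      fun t' => (dirDeriv (0, 1))^[m] f (t', x) :=
    ((Continuous.prodMk_left x).continuousAt.eventually hf.eventually_analyticAt).mono
      fun _ h => h.iteratedDeriv_slice_snd m
  have hslice_fst : (fun x' => iteratedDeriv k (fun t' => f (t', x')) t) =ᶠ[𝓝 x]
      fun x' => (dirDeriv (1, 0))^[k] f (t, x') :=
    ((Continuous.prodMk_right t).continuousAt.eventually hf.eventually_analyticAt).mono
      fun _ h => h.iteratedDeriv_slice_fst k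
  rw [hslice_snd.iteratedDeriv_eq, hslice_fst.iteratedDeriv_eq,
    (analyticAt_iterate_dirDeriv hf _ m).iteratedDeriv_slice_fst,
    (analyticAt_iterate_dirDeriv hf _ k).iteratedDeriv_slice_snd]
  exact (hf.iterate_dirDeriv_comm (1, 0) (0, 1) k m).eq_of_nhds

end DirDeriv

theorem analyticAt_phiNeg (m : ℕ) (y : ℂ) {z : ℂ} (hz : z ≠ 1) : AnalyticAt ℂ (PhiNeg m y) z := by
  induction m generalizing z with
  | zero =>
    exact analyticAt_const.div (analyticAt_const.sub analyticAt_id) (sub_ne_zero.mpr hz.symm)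
  | succ m ih => exact (analyticAt_const.mul (ih hz)).add (analyticAt_id.mul (ih hz).deriv)

theorem iteratedDeriv_exp_div_one_sub_mul_exp (y u : ℂ) (m : ℕ) {x : ℂ} (hx : u * exp x ≠ 1) :
    iteratedDeriv m (fun x => exp (y * x) / (1 - u * exp x)) x =
      exp (y * x) * PhiNeg m y (u * exp x) := by
  induction m generalizing x with
  | zero => simp [PhiNeg, div_eq_mul_inv]
  | succ m ih =>
    have hnear : ∀ᶠ x' in 𝓝 x, u * exp x' ≠ 1 :=
      (continuous_const.mul continuous_exp).continuousAt.eventually_ne hx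
    have hev : iteratedDeriv m (fun x => exp (y * x) / (1 - u * exp x)) =ᶠ[𝓝 x]
        fun x => exp (y * x) * PhiNeg m y (u * exp x) := hnear.mono fun _ h => ih h
    rw [iteratedDeriv_succ, hev.deriv_eq]
    have hexp : HasDerivAt (fun x => exp (y * x)) (exp (y * x) * y) x := by
      simpa using ((hasDerivAt_id x).const_mul y).cexp
    have hphi : HasDerivAt (fun x => PhiNeg m y (u * exp x))
        (deriv (PhiNeg m y) (u * exp x) * (u * exp x)) x :=
      (analyticAt_phiNeg m y hx).differentiableAt.hasDerivAt.comp x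
        (by simpa using (hasDerivAt_exp x).const_mul u)
    rw [(hexp.fun_mul hphi).deriv, PhiNeg]
    ring

theorem iteratedDeriv_exp_div_sub_mul_exp (y p q : ℂ) (hp : p ≠ 0) (hqp : q / p ≠ 1) (m : ℕ) :
    iteratedDeriv m (fun x => exp (y * x) / (p - q * exp x)) 0 = PhiNeg m y (q / p) / p := by
  have hscale : (fun x => exp (y * x) / (p - q * exp x)) =
      fun x => p⁻¹ * (exp (y * x) / (1 - q / p * exp x)) := by
    funext x
    rw [← div_eq_inv_mul, div_div]
    congr 1
    field_simp
  rw [hscale, iteratedDeriv_const_mul_field,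
    iteratedDeriv_exp_div_one_sub_mul_exp y _ m (by simpa using hqp)]
  simp [div_eq_inv_mul]

noncomputable def polyBKernel (g : Matrix (Fin 2) (Fin 2) ℂ) (y w : ℂ) (p : ℂ × ℂ) : ℂ :=
  exp (w * p.1) * exp (y * p.2) / (jD g (exp (-p.1)) - (g 0 0 * exp (-p.1) + g 0 1) * exp p.2)

theorem iteratedDeriv_polyBKernel_snd (g : Matrix (Fin 2) (Fin 2) ℂ) (y w : ℂ) {t : ℂ}
    (hj : jD g (exp (-t)) ≠ 0) (hact : act g (exp (-t)) ≠ 1) (m : ℕ) :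
    iteratedDeriv m (fun x => polyBKernel g y w (t, x)) 0 =
      exp (w * t) * PhiNeg m y (act g (exp (-t))) / jD g (exp (-t)) := by
  simp only [polyBKernel, mul_div_assoc]
  rw [iteratedDeriv_const_mul_field, iteratedDeriv_exp_div_sub_mul_exp _ _ _ hj hact]
  rfl

theorem polyB_eq_iteratedDeriv_polyBKernel (g : Matrix (Fin 2) (Fin 2) ℂ) (hj : jD g 1 ≠ 0)
    (hact : act g 1 ≠ 1) (k m : ℕ) (y w : ℂ) :
    polyB g k m y w =
      iteratedDeriv m (fun t => iteratedDeriv k (fun x => polyBKernel g y w (t, x)) 0) 0 := by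
  have hj_cont : Continuous fun t : ℂ => jD g (exp (-t)) := by unfold jD; fun_prop
  have hj_near : ∀ᶠ t in 𝓝 (0 : ℂ), jD g (exp (-t)) ≠ 0 :=
    hj_cont.continuousAt.eventually_ne (by simpa using hj)
  have hact_near : ∀ᶠ t in 𝓝 (0 : ℂ), act g (exp (-t)) ≠ 1 := by
    refine ContinuousAt.eventually_ne ?_ (by simpa using hact)
    exact (by fun_prop : Continuous fun t : ℂ => g 0 0 * exp (-t) + g 0 1).continuousAt.div
      hj_cont.continuousAt (by simpa using hj)
  rw [polyB]
  refine Filter.EventuallyEq.iteratedDeriv_eq m ?_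
  filter_upwards [hj_near, hact_near] with t hjt hactt
  exact (iteratedDeriv_polyBKernel_snd g y w hjt hactt k).symm

theorem analyticAt_polyBKernel (g : Matrix (Fin 2) (Fin 2) ℂ) (y w : ℂ) (hj : jD g 1 ≠ 0)
    (hact : act g 1 ≠ 1) : AnalyticAt ℂ (polyBKernel g y w) (0, 0) := by
  have hden : jD g 1 - (g 0 0 * 1 + g 0 1) ≠ 0 := by
    rw [sub_ne_zero]
    intro h
    exact hact (by rw [act, ← h, div_self hj])
  have hexp_fst : AnalyticAt ℂ (fun p : ℂ × ℂ => exp (-p.1)) (0, 0) := analyticAt_fst.neg.cexp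
  refine AnalyticAt.div ?_ ?_ (by simpa using hden)
  · exact ((analyticAt_const.mul analyticAt_fst).cexp).mul
      ((analyticAt_const.mul analyticAt_snd).cexp)
  · exact ((analyticAt_const.mul hexp_fst).add analyticAt_const).sub
      (((analyticAt_const.mul hexp_fst).add analyticAt_const).mul analyticAt_snd.cexp)

theorem Matrix.inv_fin_two_apply {K : Type*} [Field K] (g : Matrix (Fin 2) (Fin 2) K) :
    g⁻¹ 0 0 = g.det⁻¹ * g 1 1 ∧ g⁻¹ 0 1 = -(g.det⁻¹ * g 0 1) ∧
      g⁻¹ 1 0 = -(g.det⁻¹ * g 1 0) ∧ g⁻¹ 1 1 = g.det⁻¹ * g 0 0 := by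
  simp [Matrix.inv_def, Matrix.adjugate_fin_two, Ring.inverse_eq_inv']

theorem polyBKernel_inv_swap (g : Matrix (Fin 2) (Fin 2) ℂ) (hdet : g.det ≠ 0) (y w t x : ℂ) :
    polyBKernel g y (w - 1) (t, x) = -(1 / g.det) * polyBKernel g⁻¹ w (y - 1) (x, t) := by
  obtain ⟨h00, h01, h10, h11⟩ := Matrix.inv_fin_two_apply g
  simp only [polyBKernel, jD, h00, h01, h10, h11]
  have hexp_neg : ∀ u : ℂ, exp (-u) * exp u = 1 := fun u => by
    rw [← exp_add, neg_add_cancel, exp_zero]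
  set D := -(g.det⁻¹ * g 1 0) * exp (-x) + g.det⁻¹ * g 0 0 -
    (g.det⁻¹ * g 1 1 * exp (-x) + -(g.det⁻¹ * g 0 1)) * exp t with hD
  have hden : g 1 0 * exp (-t) + g 1 1 - (g 0 0 * exp (-t) + g 0 1) * exp x =
      -(g.det * exp (-t) * exp x) * D := by
    rw [hD]
    linear_combination (-(g 1 0 * exp (-t)) - g 1 1 * exp (-t) * exp t) * hexp_neg x +
      (g 0 1 * exp x - g 1 1) * hexp_neg t +
      exp (-t) * exp x * (g 0 0 - g 1 0 * exp (-x) - (g 1 1 * exp (-x) - g 0 1) * exp t) *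
        mul_inv_cancel₀ hdet
  have hexp_sub : ∀ v u : ℂ, exp ((v - 1) * u) = exp (v * u) * exp (-u) := fun v u => by
    rw [← exp_add]; ring_nf
  rw [hden, hexp_sub, hexp_sub]
  rcases eq_or_ne D 0 with hD0 | hD0
  · simp only [hD0, mul_zero, div_zero]
  · field_simp
    linear_combination hexp_neg x

theorem jD_inv_one (g : Matrix (Fin 2) (Fin 2) ℂ) : jD g⁻¹ 1 = g.det⁻¹ * (g 0 0 - g 1 0) := by
  obtain ⟨-, -, h10, h11⟩ := Matrix.inv_fin_two_apply g
  rw [jD, h10, h11]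
  ring

theorem act_inv_one (g : Matrix (Fin 2) (Fin 2) ℂ) (hdet : g.det ≠ 0) :
    act g⁻¹ 1 = (g 1 1 - g 0 1) / (g 0 0 - g 1 0) := by
  obtain ⟨h00, h01, -, -⟩ := Matrix.inv_fin_two_apply g
  rw [act, jD_inv_one, h00, h01, mul_one, ← sub_eq_add_neg, ← mul_sub,
    mul_div_mul_left _ _ (inv_ne_zero hdet)]

theorem stmt13_general (g : Matrix (Fin 2) (Fin 2) ℂ) (hdet : g.det ≠ 0)
    (hcd : g 1 0 + g 1 1 ≠ 0)
    (hg1 : (g 0 0 + g 0 1) / (g 1 0 + g 1 1) ≠ 1)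
    (hac : g 0 0 ≠ g 1 0) :
    ∀ (k m : ℕ) (y w : ℂ),
      polyB g m k y (w - 1) = -(1 / g.det) * polyB g⁻¹ k m w (y - 1) := by
  intro k m y w
  have hj : jD g 1 ≠ 0 := by simpa [jD] using hcd
  have hact : act g 1 ≠ 1 := by simpa [act, jD] using hg1
  have hac_sub : g 0 0 - g 1 0 ≠ 0 := sub_ne_zero.mpr hac
  have hj_inv : jD g⁻¹ 1 ≠ 0 := by
    rw [jD_inv_one]
    exact mul_ne_zero (inv_ne_zero hdet) hac_sub
  have hact_inv : act g⁻¹ 1 ≠ 1 := by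
    rw [act_inv_one g hdet, Ne, div_eq_one_iff_eq hac_sub]
    intro h
    exact hg1 ((div_eq_one_iff_eq hcd).mpr (by linear_combination -h))
  calc polyB g m k y (w - 1)
      = iteratedDeriv k (fun t => iteratedDeriv m
          (fun x => polyBKernel g y (w - 1) (t, x)) 0) 0 :=
        polyB_eq_iteratedDeriv_polyBKernel g hj hact m k y (w - 1)
    _ = iteratedDeriv m (fun x => iteratedDeriv k
          (fun t => polyBKernel g y (w - 1) (t, x)) 0) 0 :=
        (analyticAt_polyBKernel g y (w - 1) hj hact).iteratedDeriv_iteratedDeriv_comm k m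
    _ = -(1 / g.det) * iteratedDeriv m (fun x => iteratedDeriv k
          (fun t => polyBKernel g⁻¹ w (y - 1) (x, t)) 0) 0 := by
        simp only [polyBKernel_inv_swap g hdet, iteratedDeriv_const_mul_field]
    _ = -(1 / g.det) * polyB g⁻¹ k m w (y - 1) := by
        rw [polyB_eq_iteratedDeriv_polyBKernel g⁻¹ hj_inv hact_inv]

theorem stmt13 (g : Matrix (Fin 2) (Fin 2) ℂ) (hdet : g.det ≠ 0)
    (hcd : g 1 0 + g 1 1 ≠ 0)
    (hg1 : (g 0 0 + g 0 1) / (g 1 0 + g 1 1) ≠ 1)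
    (hac : g 0 0 ≠ g 1 0) (hC : condC g) :
    ∀ (k m : ℕ) (y w : ℂ),
      polyB g m k y (w - 1) = -(1 / g.det) * polyB g⁻¹ k m w (y - 1) :=
  stmt13_general g hdet hcd hg1 hac
end

section
/- Let g = [[a,b],[c,d]] ∈ GL₂(ℂ) with c+d ≠ 0 and g1 = (a+b)/(c+d) ≠ 1. Then for all k, m ∈ ℤ≥0 and all y, w ∈ ℂ: a·𝔹_m^{(−k)}(y+1, w−1; g) + b·𝔹_m^{(−k)}(y+1, w; g) = c·𝔹_m^{(−k)}(y, w−1; g) + d·𝔹_m^{(−k)}(y, w; g) − y^k·w^m. -/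
/-!
With `u = g e^{−t}` and `e^{(w−1)t} = e^{−t} e^{wt}`, the generating function of the left side is
`e^{wt} (a e^{−t} + b) Φ(u,−k,y+1) / j_D(g,e^{−t}) = e^{wt} u Φ(u,−k,y+1)`, and that of the right side
is `e^{wt} Φ(u,−k,y) − y^k e^{wt}`. They agree near `t = 0` because `u Φ(u,−k,y+1) = Φ(u,−k,y) − y^k`,
the series `Σ (y+n)^k u^n` shifted by one; differentiating `m` times at `0` gives the relation.
-/

open Filter Topology

noncomputable def polyBGen (g : Matrix (Fin 2) (Fin 2) ℂ) (k : ℕ) (y w : ℂ) (t : ℂ) : ℂ :=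
  Complex.exp (w * t) * PhiNeg k y (act g (Complex.exp (-t))) / jD g (Complex.exp (-t))

lemma polyB_eq_iteratedDeriv_polyBGen (g : Matrix (Fin 2) (Fin 2) ℂ) (k m : ℕ) (y w : ℂ) :
    polyB g k m y w = iteratedDeriv m (polyBGen g k y w) 0 :=
  rfl

lemma analyticOnNhd_PhiNeg (k : ℕ) (y : ℂ) : AnalyticOnNhd ℂ (PhiNeg k y) {1}ᶜ := by
  induction k generalizing y with
  | zero =>
    exact analyticOnNhd_const.div (analyticOnNhd_const.sub analyticOnNhd_id)
      fun z hz => sub_ne_zero.mpr (Ne.symm hz)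
  | succ k ih =>
    exact (analyticOnNhd_const.mul (ih y)).add (analyticOnNhd_id.mul (ih y).deriv)

lemma mul_PhiNeg_add_one (k : ℕ) (y : ℂ) {u : ℂ} (hu : u ≠ 1) :
    u * PhiNeg k (y + 1) u = PhiNeg k y u - y ^ k := by
  induction k generalizing y u with
  | zero =>
    simp only [PhiNeg, pow_zero]
    field_simp [sub_ne_zero.mpr (Ne.symm hu)]
    ring
  | succ k ih =>
    have hderiv : PhiNeg k (y + 1) u + u * deriv (PhiNeg k (y + 1)) u = deriv (PhiNeg k y) u := by
      have heq : (fun z => z * PhiNeg k (y + 1) z) =ᶠ[𝓝 u] fun z => PhiNeg k y z - y ^ k := by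
        filter_upwards [isOpen_compl_singleton.mem_nhds hu] with z hz using ih y hz
      have h := heq.deriv_eq
      rw [deriv_fun_mul differentiableAt_fun_id
          (analyticOnNhd_PhiNeg k (y + 1) u hu).differentiableAt, deriv_id'', one_mul,
        deriv_sub_const] at h
      exact h
    simp only [PhiNeg]
    linear_combination y * ih y hu + u * hderiv

lemma jD_one (g : Matrix (Fin 2) (Fin 2) ℂ) : jD g 1 = g 1 0 + g 1 1 := by
  simp [jD]

lemma act_one (g : Matrix (Fin 2) (Fin 2) ℂ) : act g 1 = (g 0 0 + g 0 1) / (g 1 0 + g 1 1) := by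
  simp [act, jD_one]

lemma analyticAt_act (g : Matrix (Fin 2) (Fin 2) ℂ) {z : ℂ} (hz : jD g z ≠ 0) :
    AnalyticAt ℂ (act g) z :=
  ((analyticAt_const.mul analyticAt_id).add analyticAt_const).div
    ((analyticAt_const.mul analyticAt_id).add analyticAt_const) hz

lemma analyticAt_polyBGen (g : Matrix (Fin 2) (Fin 2) ℂ) (k : ℕ) (y w : ℂ) {t : ℂ}
    (hj : jD g (Complex.exp (-t)) ≠ 0) (hact : act g (Complex.exp (-t)) ≠ 1) :
    AnalyticAt ℂ (polyBGen g k y w) t := by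
  have hexp : AnalyticAt ℂ (fun t : ℂ => Complex.exp (-t)) t := analyticAt_id.neg.cexp
  have hact' : AnalyticAt ℂ (fun t => act g (Complex.exp (-t))) t :=
    (analyticAt_act g hj).comp (f := fun t : ℂ => Complex.exp (-t)) hexp
  have hPhi : AnalyticAt ℂ (fun t => PhiNeg k y (act g (Complex.exp (-t)))) t :=
    (analyticOnNhd_PhiNeg k y _ hact).comp (f := fun t : ℂ => act g (Complex.exp (-t))) hact'
  exact ((analyticAt_const.mul analyticAt_id).cexp.mul hPhi).div
    ((analyticAt_const.mul hexp).add analyticAt_const) hj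

lemma eventually_jD_ne_zero_and_act_ne_one (g : Matrix (Fin 2) (Fin 2) ℂ)
    (hcd : g 1 0 + g 1 1 ≠ 0) (hg1 : (g 0 0 + g 0 1) / (g 1 0 + g 1 1) ≠ 1) :
    ∀ᶠ t in 𝓝 (0 : ℂ), jD g (Complex.exp (-t)) ≠ 0 ∧ act g (Complex.exp (-t)) ≠ 1 := by
  rw [← jD_one] at hcd
  rw [← act_one] at hg1
  have hexp : Tendsto (fun t : ℂ => Complex.exp (-t)) (𝓝 0) (𝓝 1) := by
    simpa using (continuous_neg.cexp.tendsto (0 : ℂ))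
  have hj : ∀ᶠ z in 𝓝 (1 : ℂ), jD g z ≠ 0 :=
    (continuous_const.mul continuous_id |>.add continuous_const).continuousAt.eventually_ne hcd
  have hact : ∀ᶠ z in 𝓝 (1 : ℂ), act g z ≠ 1 :=
    (analyticAt_act g hcd).continuousAt.eventually_ne hg1
  exact hexp.eventually (hj.and hact)

lemma jD_mul_PhiNeg_act (g : Matrix (Fin 2) (Fin 2) ℂ) (k : ℕ) (y : ℂ) {z : ℂ}
    (hj : jD g z ≠ 0) (hact : act g z ≠ 1) :
    (g 0 0 * z + g 0 1) * PhiNeg k (y + 1) (act g z) = jD g z * (PhiNeg k y (act g z) - y ^ k) := by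
  rw [← mul_PhiNeg_add_one k y hact, act]
  field_simp

lemma polyBGen_difference (g : Matrix (Fin 2) (Fin 2) ℂ) (k : ℕ) (y w : ℂ) {t : ℂ}
    (hj : jD g (Complex.exp (-t)) ≠ 0) (hact : act g (Complex.exp (-t)) ≠ 1) :
    g 0 0 * polyBGen g k (y + 1) (w - 1) t + g 0 1 * polyBGen g k (y + 1) w t =
      g 1 0 * polyBGen g k y (w - 1) t + g 1 1 * polyBGen g k y w t -
        y ^ k * Complex.exp (w * t) := by
  have hexp : Complex.exp ((w - 1) * t) = Complex.exp (w * t) * Complex.exp (-t) := by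
    rw [← Complex.exp_add]; ring_nf
  have key := jD_mul_PhiNeg_act g k y hj hact
  simp only [polyBGen, hexp]
  generalize PhiNeg k (y + 1) (act g (Complex.exp (-t))) = P₁ at key ⊢
  generalize PhiNeg k y (act g (Complex.exp (-t))) = P₀ at key ⊢
  field_simp
  rw [jD] at key ⊢
  linear_combination key

theorem stmt15_general (g : Matrix (Fin 2) (Fin 2) ℂ)
    (hcd : g 1 0 + g 1 1 ≠ 0)
    (hg1 : (g 0 0 + g 0 1) / (g 1 0 + g 1 1) ≠ 1) :
    ∀ (k m : ℕ) (y w : ℂ),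
      g 0 0 * polyB g k m (y + 1) (w - 1) + g 0 1 * polyB g k m (y + 1) w =
        g 1 0 * polyB g k m y (w - 1) + g 1 1 * polyB g k m y w - y ^ k * w ^ m := by
  intro k m y w
  have hnear := eventually_jD_ne_zero_and_act_ne_one g hcd hg1
  have hterm : ∀ c y' w', ContDiffAt ℂ m (fun t => c * polyBGen g k y' w' t) 0 := fun c y' w' =>
    contDiffAt_const.mul
      (analyticAt_polyBGen g k y' w' hnear.self_of_nhds.1 hnear.self_of_nhds.2).contDiffAt
  have hrel : (fun t => g 0 0 * polyBGen g k (y + 1) (w - 1) t + g 0 1 * polyBGen g k (y + 1) w t)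
      =ᶠ[𝓝 0] fun t => g 1 0 * polyBGen g k y (w - 1) t + g 1 1 * polyBGen g k y w t -
        y ^ k * Complex.exp (w * t) := by
    filter_upwards [hnear] with t ht using polyBGen_difference g k y w ht.1 ht.2
  have hexp : ContDiffAt ℂ m (fun t => Complex.exp (w * t)) 0 :=
    (contDiff_const.mul contDiff_id).cexp.contDiffAt
  have h := hrel.iteratedDeriv_eq m
  rw [iteratedDeriv_fun_add (hterm _ _ _) (hterm _ _ _),
    iteratedDeriv_fun_sub ((hterm _ _ _).add (hterm _ _ _)) (contDiffAt_const.mul hexp),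
    iteratedDeriv_fun_add (hterm _ _ _) (hterm _ _ _)] at h
  simpa only [iteratedDeriv_const_mul_field, iteratedDeriv_cexp_const_mul, mul_zero,
    Complex.exp_zero, mul_one, ← polyB_eq_iteratedDeriv_polyBGen] using h

theorem stmt15 (g : Matrix (Fin 2) (Fin 2) ℂ) (hdet : g.det ≠ 0)
    (hcd : g 1 0 + g 1 1 ≠ 0)
    (hg1 : (g 0 0 + g 0 1) / (g 1 0 + g 1 1) ≠ 1) :
    ∀ (k m : ℕ) (y w : ℂ),
      g 0 0 * polyB g k m (y + 1) (w - 1) + g 0 1 * polyB g k m (y + 1) w =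
        g 1 0 * polyB g k m y (w - 1) + g 1 1 * polyB g k m y w - y ^ k * w ^ m :=
  stmt15_general g hcd hg1
end
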